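/- arXiv:2201.03380 — 12 statements merged into one kernel-verified Lean document; each statement's English description precedes it below -/
import Mathlib

section
/- Let 𝒳 be a linearly ordered set, let X and X' be finite multisets over 𝒳 with X a sub-multiset of X', let α ∈ (0,1] and q ∈ [0,1], and suppose |X'| ≤ (1 + α/2)·|X|. If x ∈ 𝒳 satisfies q·|X| − (α/2)·|X| ≤ r_max(X, x) ≤ q·|X| + (α/2)·|X| (i.e., x is an (α/2)-approximate q-quantile of X), then q·|X'| − α·|X'| ≤ r_max(X', x) ≤ q·|X'| + α·|X'| (i.e., x is an α-approximate q-quantile of X'). -/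
/-!
Write `X' = X + Y`. Adding `Y` raises `rmax · x` by at most `|Y| ≤ (α/2)|X|`, which is exactly
the slack between an `(α/2)`-approximate and an `α`-approximate quantile of `X`; the remaining
terms `q|Y|` and `α|Y|` only widen the window for `X'`.
-/

/-- `rmin X x` is the number of elements of the multiset `X` strictly less than `x`. -/
def rmin {𝒳 : Type*} [LinearOrder 𝒳] (X : Multiset 𝒳) (x : 𝒳) : ℕ :=
  (X.filter (fun y => y < x)).card

/-- `rmax X x` is the number of elements of the multiset `X` at most `x`. -/
def rmax {𝒳 : Type*} [LinearOrder 𝒳] (X : Multiset 𝒳) (x : 𝒳) : ℕ :=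
  (X.filter (fun y => y ≤ x)).card

theorem rmax_add {𝒳 : Type*} [LinearOrder 𝒳] (X Y : Multiset 𝒳) (x : 𝒳) :
    rmax (X + Y) x = rmax X x + rmax Y x := by
  simp only [rmax, Multiset.filter_add, Multiset.card_add]

theorem rmax_le_card {𝒳 : Type*} [LinearOrder 𝒳] (X : Multiset 𝒳) (x : 𝒳) :
    rmax X x ≤ Multiset.card X :=
  Multiset.card_le_card (Multiset.filter_le _ X)

theorem stmt0_general {𝒳 : Type*} [LinearOrder 𝒳] (X X' : Multiset 𝒳) (hsub : X ≤ X')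
    (α q : ℝ) (hα0 : 0 < α) (hq0 : 0 ≤ q) (hq1 : q ≤ 1)
    (hsize : (X'.card : ℝ) ≤ (1 + α / 2) * X.card)
    (x : 𝒳)
    (h1 : q * X.card - (α / 2) * X.card ≤ (rmax X x : ℝ))
    (h2 : (rmax X x : ℝ) ≤ q * X.card + (α / 2) * X.card) :
    q * X'.card - α * X'.card ≤ (rmax X' x : ℝ) ∧
      (rmax X' x : ℝ) ≤ q * X'.card + α * X'.card := by
  obtain ⟨Y, rfl⟩ := le_iff_exists_add.mp hsub
  have hrY : (rmax Y x : ℝ) ≤ Y.card := by exact_mod_cast rmax_le_card Y x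
  have hY : (Y.card : ℝ) ≤ (α / 2) * X.card := by
    rw [Multiset.card_add, Nat.cast_add] at hsize
    linarith
  have hX : (0 : ℝ) ≤ X.card := Nat.cast_nonneg _
  have hqY : q * Y.card ≤ Y.card := mul_le_of_le_one_left (Nat.cast_nonneg _) hq1
  have hαY : 0 ≤ α * Y.card := mul_nonneg hα0.le (Nat.cast_nonneg _)
  have hqY0 : 0 ≤ q * Y.card := mul_nonneg hq0 (Nat.cast_nonneg _)
  rw [rmax_add, Multiset.card_add]
  push_cast
  constructor <;> linarith

theorem stmt0 {𝒳 : Type*} [LinearOrder 𝒳] (X X' : Multiset 𝒳) (hsub : X ≤ X')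
    (α q : ℝ) (hα0 : 0 < α) (hα1 : α ≤ 1) (hq0 : 0 ≤ q) (hq1 : q ≤ 1)
    (hsize : (X'.card : ℝ) ≤ (1 + α / 2) * X.card)
    (x : 𝒳)
    (h1 : q * X.card - (α / 2) * X.card ≤ (rmax X x : ℝ))
    (h2 : (rmax X x : ℝ) ≤ q * X.card + (α / 2) * X.card) :
    q * X'.card - α * X'.card ≤ (rmax X' x : ℝ) ∧
      (rmax X' x : ℝ) ≤ q * X'.card + α * X'.card :=
  stmt0_general X X' hsub α q hα0 hq0 hq1 hsize x h1 h2
end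

section
/- Let s ≥ 1 and n ≥ 1 be integers, let g, Δ : {1,…,s} → ℕ satisfy Σ_{i=1}^s g_i = n, g_1 = 1, Δ_1 = 0 and Δ_s = 0, and let e ≥ 0 be a real number with g_i + Δ_i ≤ 2e for every i. Define rmin_i = Σ_{j ≤ i} g_j and rmax_i = rmin_i + Δ_i. Then for every integer r with 1 ≤ r ≤ n there exists i ∈ {1,…,s} such that max(r − rmin_i, rmax_i − r) ≤ e. -/
/-!
Walk down from the last tuple, where `rmin = n ≥ r`. As long as `rmax_i > r + e`, the bound
`g_i + Δ_i ≤ 2e` gives `rmin_{i-1} = rmax_i - g_i - Δ_i > r - e`, so the walk may continue; it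
stops at the latest at the first tuple, where `rmax = 1 ≤ r + e`.
-/

open Finset

theorem Fin.exists_lo_le_lower_and_upper_le {α : Type*} [AddCommGroup α] [LinearOrder α]
    [IsOrderedAddMonoid α] {m : ℕ} (lower upper : Fin (m + 1) → α) {lo hi : α}
    (h_zero : upper 0 ≤ hi) (h_last : lo ≤ lower (Fin.last m))
    (h_step : ∀ k : Fin m, upper k.succ - lower k.castSucc ≤ hi - lo) :
    ∃ i, lo ≤ lower i ∧ upper i ≤ hi := by
  suffices ∀ k : Fin (m + 1), lo ≤ lower k → ∃ i, lo ≤ lower i ∧ upper i ≤ hi from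
    this _ h_last
  intro k
  induction k using Fin.induction with
  | zero => exact fun h => ⟨0, h, h_zero⟩
  | succ k ih =>
    intro hk
    by_cases h : upper k.succ ≤ hi
    · exact ⟨k.succ, hk, h⟩
    · apply ih
      have h_gap := h_step k
      rw [sub_le_sub_iff] at h_gap
      have h_gt : hi + lo < upper k.succ + lo := add_lt_add_of_lt_of_le (not_le.1 h) le_rfl
      exact (lt_of_add_lt_add_left (h_gt.trans_le h_gap)).le

theorem Fin.sum_Iic_succ {M : Type*} [AddCommMonoid M] {m : ℕ} (f : Fin (m + 1) → M)
    (k : Fin m) : ∑ i ≤ k.succ, f i = ∑ i ≤ k.castSucc, f i + f k.succ := by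
  have : Iic k.succ = insert k.succ (Iic k.castSucc) := by
    ext i
    simp only [mem_Iic, mem_insert, Fin.le_castSucc_iff]
    exact le_iff_eq_or_lt
  rw [this, sum_insert (by simp), add_comm]

theorem stmt1 (s n : ℕ) (hs : 1 ≤ s)
    (g Δ : Fin s → ℕ) (hsum : ∑ i, g i = n)
    (hg1 : g ⟨0, hs⟩ = 1) (hΔ1 : Δ ⟨0, hs⟩ = 0)
    (e : ℝ) (he : 0 ≤ e)
    (hge : ∀ i : Fin s, ((g i : ℝ) + (Δ i : ℝ)) ≤ 2 * e)
    (r : ℕ) (hr1 : 1 ≤ r) (hrn : r ≤ n) :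
    ∃ i : Fin s,
      max ((r : ℝ) - (∑ j ∈ Finset.univ.filter (fun j => j ≤ i), g j : ℕ))
          (((∑ j ∈ Finset.univ.filter (fun j => j ≤ i), g j : ℕ) + (Δ i : ℝ)) - r) ≤ e := by
  obtain ⟨m, rfl⟩ : ∃ m, s = m + 1 := ⟨s - 1, by omega⟩
  simp only [filter_ge_eq_Iic]
  set rmin : Fin (m + 1) → ℝ := fun i => ((∑ j ≤ i, g j : ℕ) : ℝ)
  have h_zero : rmin 0 + Δ 0 ≤ r + e := by
    have : (1 : ℝ) ≤ r := by exact_mod_cast hr1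
    have h_first : (0 : Fin (m + 1)) = ⟨0, hs⟩ := rfl
    simp only [rmin, ← bot_eq_zero, Iic_bot, sum_singleton]
    rw [bot_eq_zero, h_first, hg1, hΔ1]
    push_cast
    linarith
  have h_last : (r : ℝ) - e ≤ rmin (Fin.last m) := by
    simp only [rmin, ← Fin.top_eq_last, Iic_top, hsum]
    have : (r : ℝ) ≤ n := by exact_mod_cast hrn
    linarith
  have h_step (k : Fin m) : rmin k.succ + Δ k.succ - rmin k.castSucc ≤ (r + e) - (r - e) := by
    simp only [rmin, Fin.sum_Iic_succ, Nat.cast_add]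
    linarith [hge k.succ]
  obtain ⟨i, hlo, hhi⟩ := Fin.exists_lo_le_lower_and_upper_le rmin (fun i => rmin i + Δ i)
    h_zero h_last h_step
  exact ⟨i, max_le (by linarith) (by linarith)⟩
end

section
/- Let X be a finite multiset of size n over a linearly ordered set 𝒳, let α > 0, s ≥ 1, let v : {1,…,s} → 𝒳 be nondecreasing and g, Δ : {1,…,s} → ℕ satisfy, for every i: (a) Σ_{j≤i} g_j ≤ r_min(X, v_i) and r_max(X, v_i) ≤ Δ_i + Σ_{j≤i} g_j; (b) g_i + Δ_i ≤ 2αn; (c) the map i ↦ Δ_i + Σ_{j≤i} g_j is nondecreasing. Let x ∈ 𝒳 be such that the sets {i : v_i < x} and {i : v_i > x} are both nonempty, and define r̂_min(x) = max{ Σ_{j≤i} g_j : v_i < x } and r̂_max(x) = min{ Δ_i + Σ_{j≤i} g_j : v_i > x }. Then |r_min(X, x) − r̂_min(x)| ≤ 2αn and |r_max(X, x) − r̂_max(x)| ≤ 2αn. -/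
open Finset

private lemma card_filter_mono {𝒳 : Type*} (X : Multiset 𝒳) {p q : 𝒳 → Prop}
    [DecidablePred p] [DecidablePred q] (h : ∀ y, p y → q y) :
    (X.filter p).card ≤ (X.filter q).card :=
  Multiset.card_le_card (Multiset.monotone_filter_right X h)

theorem stmt2 {𝒳 : Type*} [LinearOrder 𝒳] (X : Multiset 𝒳) (n : ℕ) (hn : X.card = n)
    (α : ℝ) (hα : 0 < α) (s : ℕ) (hs : 1 ≤ s)
    (v : Fin s → 𝒳) (hv : Monotone v) (g Δ : Fin s → ℕ)
    (ha : ∀ i : Fin s,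
      (∑ j ∈ Finset.univ.filter (fun j => j ≤ i), g j) ≤ rmin X (v i) ∧
        rmax X (v i) ≤ Δ i + ∑ j ∈ Finset.univ.filter (fun j => j ≤ i), g j)
    (hb : ∀ i : Fin s, ((g i : ℝ) + (Δ i : ℝ)) ≤ 2 * α * n)
    (hc : Monotone (fun i : Fin s => Δ i + ∑ j ∈ Finset.univ.filter (fun j => j ≤ i), g j))
    (x : 𝒳)
    (hlt : ∃ i, v i < x) (hgt : ∃ i, x < v i)
    (rhatmin rhatmax : ℕ)
    (hrhatmin : IsGreatest
      {y : ℕ | ∃ i : Fin s, v i < x ∧ y = ∑ j ∈ Finset.univ.filter (fun j => j ≤ i), g j}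
      rhatmin)
    (hrhatmax : IsLeast
      {y : ℕ | ∃ i : Fin s, x < v i ∧ y = Δ i + ∑ j ∈ Finset.univ.filter (fun j => j ≤ i), g j}
      rhatmax) :
    |(rmin X x : ℝ) - rhatmin| ≤ 2 * α * n ∧ |(rmax X x : ℝ) - rhatmax| ≤ 2 * α * n := by
  set G : Fin s → ℕ := fun i => ∑ j ∈ Finset.univ.filter (fun j => j ≤ i), g j with hG
  have hsplit : ∀ (c : Fin s) (hc0 : 0 < c.1),
      G c = g c + G ⟨c.1 - 1, by omega⟩ := by
    intro c hc0
    have hlt1 : c.1 - 1 < s := by omega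
    have hins : Finset.univ.filter (fun j : Fin s => j ≤ c)
        = insert c (Finset.univ.filter (fun j : Fin s => j ≤ ⟨c.1 - 1, hlt1⟩)) := by
      ext j
      simp only [mem_filter, mem_univ, true_and, mem_insert, Fin.le_def, Fin.ext_iff]
      omega
    have hnot : c ∉ Finset.univ.filter (fun j : Fin s => j ≤ ⟨c.1 - 1, hlt1⟩) := by
      simp only [mem_filter, mem_univ, true_and, Fin.le_def]
      omega
    simp only [hG, hins, Finset.sum_insert hnot]
  have h2αn : (0:ℝ) ≤ 2 * α * n := by positivity
  -- Part 1 : rmin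
  obtain ⟨a, hax, harm⟩ := hrhatmin.1
  have hmin_lb : rhatmin ≤ rmin X x := by
    calc rhatmin = G a := harm
    _ ≤ rmin X (v a) := (ha a).1
    _ ≤ rmin X x := card_filter_mono X (fun y hy => lt_trans hy hax)
  -- c : minimal index with x ≤ v c
  have hne : (Finset.univ.filter (fun i : Fin s => x ≤ v i)).Nonempty := by
    obtain ⟨b, hb'⟩ := hgt
    exact ⟨b, by simp [le_of_lt hb']⟩
  set c := (Finset.univ.filter (fun i : Fin s => x ≤ v i)).min' hne with hcdef
  have hxc : x ≤ v c := by
    have := Finset.min'_mem _ hne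
    simpa using this
  have hc0 : 0 < c.1 := by
    by_contra h
    have hc0' : c = a ∨ c < a := by
      rcases lt_or_eq_of_le (Fin.le_def.mpr (by omega : c.1 ≤ a.1)) with h' | h'
      · exact Or.inr h'
      · exact Or.inl h'
    have : x ≤ v a := le_trans hxc (by
      rcases hc0' with h' | h'
      · exact le_of_eq (congrArg v h')
      · exact hv (le_of_lt h'))
    exact absurd hax (not_lt.mpr this)
  set c' : Fin s := ⟨c.1 - 1, by omega⟩ with hc'def
  have hc'x : v c' < x := by
    by_contra h
    push_neg at h
    have : c ≤ c' := Finset.min'_le _ _ (by simp [h])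
    simp only [Fin.le_def, hc'def] at this
    omega
  have hmin_ub : rmin X x ≤ g c + Δ c + rhatmin := by
    calc rmin X x ≤ rmax X (v c) := card_filter_mono X (fun y hy => le_of_lt (lt_of_lt_of_le hy hxc))
    _ ≤ Δ c + G c := (ha c).2
    _ = Δ c + (g c + G c') := by rw [hsplit c hc0]
    _ ≤ g c + Δ c + rhatmin := by
        have : G c' ≤ rhatmin := hrhatmin.2 ⟨c', hc'x, rfl⟩
        omega
  -- Part 2 : rmax
  obtain ⟨b, hbx, hbrm⟩ := hrhatmax.1
  have hmax_ub : rmax X x ≤ rhatmax := by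
    calc rmax X x ≤ rmin X (v b) := card_filter_mono X (fun y hy => lt_of_le_of_lt hy hbx)
    _ ≤ rmax X (v b) := card_filter_mono X (fun y hy => le_of_lt hy)
    _ ≤ Δ b + G b := (ha b).2
    _ = rhatmax := hbrm.symm
  -- d : maximal index with v d ≤ x
  have hne2 : (Finset.univ.filter (fun i : Fin s => v i ≤ x)).Nonempty := by
    obtain ⟨a', ha'⟩ := hlt
    exact ⟨a', by simp [le_of_lt ha']⟩
  set d := (Finset.univ.filter (fun i : Fin s => v i ≤ x)).max' hne2 with hddef
  have hdx : v d ≤ x := by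
    have := Finset.max'_mem _ hne2
    simpa using this
  have hdb : d < b := by
    rcases lt_or_ge d b with h | h
    · exact h
    · exact absurd (hv h) (not_le.mpr (lt_of_le_of_lt hdx hbx))
  have hd1 : d.1 + 1 < s := by
    have := b.2
    have := Fin.lt_def.mp hdb
    omega
  set e : Fin s := ⟨d.1 + 1, hd1⟩ with hedef
  have hex : x < v e := by
    by_contra h
    push_neg at h
    have : e ≤ d := Finset.le_max' _ _ (by simp [h])
    simp only [Fin.le_def, hedef] at this
    omega
  have hGed : G e = g e + G d := by
    have := hsplit e (by simp [hedef])
    convert this using 3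
    exact Fin.ext (by simp [hedef])
  have hmax_lb : rhatmax ≤ g e + Δ e + rmax X x := by
    calc rhatmax ≤ Δ e + G e := hrhatmax.2 ⟨e, hex, rfl⟩
    _ = Δ e + (g e + G d) := by rw [hGed]
    _ ≤ g e + Δ e + rmin X (v d) := by
        have : G d ≤ rmin X (v d) := (ha d).1
        omega
    _ ≤ g e + Δ e + rmax X x := by
        have : rmin X (v d) ≤ rmax X x :=
          card_filter_mono X (fun y hy => le_of_lt (lt_of_lt_of_le hy hdx))
        omega
  constructor
  · rw [abs_le]
    constructor
    · have : (rhatmin : ℝ) ≤ rmin X x := by exact_mod_cast hmin_lb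
      linarith
    · have h1 : (rmin X x : ℝ) ≤ g c + Δ c + rhatmin := by exact_mod_cast hmin_ub
      have h2 := hb c
      linarith
  · rw [abs_le]
    constructor
    · have h1 : (rhatmax : ℝ) ≤ g e + Δ e + rmax X x := by exact_mod_cast hmax_lb
      have h2 := hb e
      linarith
    · have : (rmax X x : ℝ) ≤ rhatmax := by exact_mod_cast hmax_ub
      linarith
end

section
/- Let 𝒳 be a linearly ordered set, let X and X' be swap-neighboring finite multisets over 𝒳 of size n, let α > 0 and t ∈ ℝ. Suppose r̂_min, r̂_max : 𝒳 → ℝ satisfy r̂_min(x) ≤ r̂_max(x), |r̂_min(x) − r_min(X, x)| ≤ 2αn and |r̂_max(x) − r_max(X, x)| ≤ 2αn for all x ∈ 𝒳, and likewise r̂'_min, r̂'_max : 𝒳 → ℝ satisfy the analogous three conditions with respect to X'. Define u(x) = −d(t, [r̂_min(x), r̂_max(x)]) and u'(x) = −d(t, [r̂'_min(x), r̂'_max(x)]). Then |u(x) − u'(x)| ≤ 4αn + 2 for every x ∈ 𝒳. -/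
/-- `X'` is obtained from `X` by removing one element and inserting one element. -/
def SwapNeighbor {𝒳 : Type*} [DecidableEq 𝒳] (X X' : Multiset 𝒳) : Prop :=
  ∃ a b, a ∈ X ∧ X' = b ::ₘ X.erase a

lemma SwapNeighbor.abs_card_filter_sub_le_one {α : Type*} [DecidableEq α] {X X' : Multiset α}
    (hnb : SwapNeighbor X X') (p : α → Prop) [DecidablePred p] :
    |((X.filter p).card : ℝ) - (X'.filter p).card| ≤ 1 := by
  obtain ⟨a, b, ha, rfl⟩ := hnb
  have hX : X = a ::ₘ X.erase a := (Multiset.cons_erase ha).symm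
  rw [hX, Multiset.erase_cons_head]
  simp only [← Multiset.countP_eq_card_filter, Multiset.countP_cons]
  push_cast
  split_ifs <;> norm_num

lemma abs_sub_le_of_abs_sub_le_of_abs_sub_le {a a' b b' ε δ : ℝ} (ha : |a - b| ≤ ε)
    (ha' : |a' - b'| ≤ ε) (hb : |b - b'| ≤ δ) : |a - a'| ≤ 2 * ε + δ := by
  rw [abs_le] at *
  constructor <;> linarith

lemma Real.infDist_Icc {a b : ℝ} (hab : a ≤ b) (t : ℝ) :
    Metric.infDist t (Set.Icc a b) = dist t (max a (min b t)) := by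
  have hclamp : max a (min b t) ∈ Set.Icc a b :=
    ⟨le_max_left _ _, max_le hab (min_le_left _ _)⟩
  refine le_antisymm (Metric.infDist_le_dist_of_mem hclamp) ?_
  rw [Metric.le_infDist (Set.nonempty_Icc.mpr hab)]
  rintro y ⟨hay, hyb⟩
  simp only [Real.dist_eq]
  rcases le_total t a with hta | hat
  · rw [min_eq_right (hta.trans hab), max_eq_left hta, abs_of_nonpos (sub_nonpos.2 hta),
      abs_of_nonpos (by linarith)]
    linarith
  rcases le_total b t with hbt | htb
  · rw [min_eq_left hbt, max_eq_right hab, abs_of_nonneg (sub_nonneg.2 hbt),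
      abs_of_nonneg (by linarith)]
    linarith
  · rw [min_eq_right htb, max_eq_right hat, sub_self, abs_zero]
    exact abs_nonneg _

lemma Real.abs_infDist_Icc_sub_infDist_Icc_le {a b a' b' : ℝ} (hab : a ≤ b) (hab' : a' ≤ b')
    (t : ℝ) :
    |Metric.infDist t (Set.Icc a b) - Metric.infDist t (Set.Icc a' b')| ≤
      max |a - a'| |b - b'| := by
  rw [Real.infDist_Icc hab, Real.infDist_Icc hab', dist_comm t, dist_comm t]
  calc |dist (max a (min b t)) t - dist (max a' (min b' t)) t|
      ≤ dist (max a (min b t)) (max a' (min b' t)) := abs_dist_sub_le _ _ _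
    _ ≤ max |a - a'| |min b t - min b' t| := abs_max_sub_max_le_max _ _ _ _
    _ ≤ max |a - a'| |b - b'| :=
      max_le_max le_rfl (by simpa using abs_min_sub_min_le_max b t b' t)

theorem stmt3_general {𝒳 : Type*} [LinearOrder 𝒳] (X X' : Multiset 𝒳) (n : ℕ)
    (hnb : SwapNeighbor X X')
    (α t : ℝ)
    (rhmin rhmax rhmin' rhmax' : 𝒳 → ℝ)
    (h1 : ∀ x, rhmin x ≤ rhmax x)
    (h2 : ∀ x, |rhmin x - (rmin X x : ℝ)| ≤ 2 * α * n)
    (h3 : ∀ x, |rhmax x - (rmax X x : ℝ)| ≤ 2 * α * n)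
    (h1' : ∀ x, rhmin' x ≤ rhmax' x)
    (h2' : ∀ x, |rhmin' x - (rmin X' x : ℝ)| ≤ 2 * α * n)
    (h3' : ∀ x, |rhmax' x - (rmax X' x : ℝ)| ≤ 2 * α * n)
    (x : 𝒳) :
    |(-(Metric.infDist t (Set.Icc (rhmin x) (rhmax x)))) -
      (-(Metric.infDist t (Set.Icc (rhmin' x) (rhmax' x))))| ≤ 4 * α * n + 2 := by
  have hmin : |rhmin x - rhmin' x| ≤ 2 * (2 * α * n) + 1 :=
    abs_sub_le_of_abs_sub_le_of_abs_sub_le (h2 x) (h2' x)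
      (hnb.abs_card_filter_sub_le_one (· < x))
  have hmax : |rhmax x - rhmax' x| ≤ 2 * (2 * α * n) + 1 :=
    abs_sub_le_of_abs_sub_le_of_abs_sub_le (h3 x) (h3' x)
      (hnb.abs_card_filter_sub_le_one (· ≤ x))
  rw [neg_sub_neg, abs_sub_comm]
  calc _ ≤ max |rhmin x - rhmin' x| |rhmax x - rhmax' x| :=
        Real.abs_infDist_Icc_sub_infDist_Icc_le (h1 x) (h1' x) t
    _ ≤ 2 * (2 * α * n) + 1 := max_le hmin hmax
    _ ≤ 4 * α * n + 2 := by linarith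

theorem stmt3 {𝒳 : Type*} [LinearOrder 𝒳] (X X' : Multiset 𝒳) (n : ℕ)
    (hX : X.card = n) (hX' : X'.card = n) (hnb : SwapNeighbor X X')
    (α t : ℝ) (hα : 0 < α)
    (rhmin rhmax rhmin' rhmax' : 𝒳 → ℝ)
    (h1 : ∀ x, rhmin x ≤ rhmax x)
    (h2 : ∀ x, |rhmin x - (rmin X x : ℝ)| ≤ 2 * α * n)
    (h3 : ∀ x, |rhmax x - (rmax X x : ℝ)| ≤ 2 * α * n)
    (h1' : ∀ x, rhmin' x ≤ rhmax' x)
    (h2' : ∀ x, |rhmin' x - (rmin X' x : ℝ)| ≤ 2 * α * n)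
    (h3' : ∀ x, |rhmax' x - (rmax X' x : ℝ)| ≤ 2 * α * n)
    (x : 𝒳) :
    |(-(Metric.infDist t (Set.Icc (rhmin x) (rhmax x)))) -
      (-(Metric.infDist t (Set.Icc (rhmin' x) (rhmax' x))))| ≤ 4 * α * n + 2 :=
  stmt3_general X X' n hnb α t rhmin rhmax rhmin' rhmax' h1 h2 h3 h1' h2' h3' x
end

section
/- Let R be a finite nonempty set, let ε > 0, Δ > 0, and let u, u' : R → ℝ satisfy |u(r) − u'(r)| ≤ Δ for all r ∈ R. Let p be the Gibbs distribution on R with score r ↦ ε·u(r)/(2Δ) and p' the Gibbs distribution on R with score r ↦ ε·u'(r)/(2Δ). Then p(r) ≤ e^ε · p'(r) for every r ∈ R. -/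
/-- The Gibbs distribution on a finite set with score `f` assigns to `r` probability
`exp (f r) / ∑ r', exp (f r')`. -/
noncomputable def gibbs {R : Type*} [Fintype R] (f : R → ℝ) (r : R) : ℝ :=
  Real.exp (f r) / ∑ r', Real.exp (f r')

theorem stmt5 {R : Type*} [Fintype R] [Nonempty R] (ε Δ : ℝ) (hε : 0 < ε) (hΔ : 0 < Δ)
    (u u' : R → ℝ) (h : ∀ r, |u r - u' r| ≤ Δ) (r : R) :
    gibbs (fun r' => ε * u r' / (2 * Δ)) r ≤
      Real.exp ε * gibbs (fun r' => ε * u' r' / (2 * Δ)) r := by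
  set a : R → ℝ := fun r' => ε * u r' / (2 * Δ) with ha
  set b : R → ℝ := fun r' => ε * u' r' / (2 * Δ) with hb
  have key : ∀ s : R, |a s - b s| ≤ ε / 2 := by
    intro s
    have : a s - b s = (ε / (2 * Δ)) * (u s - u' s) := by
      simp only [ha, hb]; ring
    rw [this, abs_mul, abs_of_pos (by positivity : (0:ℝ) < ε / (2 * Δ))]
    calc ε / (2 * Δ) * |u s - u' s| ≤ ε / (2 * Δ) * Δ := by
          exact mul_le_mul_of_nonneg_left (h s) (by positivity)
      _ = ε / 2 := by field_simp
  have Sapos : 0 < ∑ r', Real.exp (a r') :=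
    Finset.sum_pos (fun s _ => Real.exp_pos _) Finset.univ_nonempty
  have Sbpos : 0 < ∑ r', Real.exp (b r') :=
    Finset.sum_pos (fun s _ => Real.exp_pos _) Finset.univ_nonempty
  have h1 : Real.exp (a r) ≤ Real.exp (ε / 2) * Real.exp (b r) := by
    rw [← Real.exp_add]
    apply Real.exp_le_exp.2
    have := abs_le.1 (key r)
    linarith [this.2]
  have h2 : (∑ r', Real.exp (b r')) ≤ Real.exp (ε / 2) * ∑ r', Real.exp (a r') := by
    rw [Finset.mul_sum]
    apply Finset.sum_le_sum
    intro s _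
    rw [← Real.exp_add]
    apply Real.exp_le_exp.2
    have := abs_le.1 (key s)
    linarith [this.1]
  show Real.exp (a r) / (∑ r', Real.exp (a r')) ≤
      Real.exp ε * (Real.exp (b r) / ∑ r', Real.exp (b r'))
  rw [div_le_iff₀ Sapos]
  have hεeq : Real.exp ε = Real.exp (ε / 2) * Real.exp (ε / 2) := by
    rw [← Real.exp_add]; ring_nf
  calc Real.exp (a r) ≤ Real.exp (ε / 2) * Real.exp (b r) := h1
    _ = Real.exp (ε / 2) * Real.exp (b r) / (∑ r', Real.exp (b r')) * (∑ r', Real.exp (b r')) := by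
        field_simp
    _ ≤ Real.exp (ε / 2) * Real.exp (b r) / (∑ r', Real.exp (b r')) *
        (Real.exp (ε / 2) * ∑ r', Real.exp (a r')) := by
        apply mul_le_mul_of_nonneg_left h2 (by positivity)
    _ = Real.exp ε * (Real.exp (b r) / ∑ r', Real.exp (b r')) * ∑ r', Real.exp (a r') := by
        rw [hεeq]; ring
end

section
/- Let R be a finite nonempty set with |R| = s, let ε > 0, Δ > 0, u : R → ℝ, and let p be the Gibbs distribution on R with score r ↦ ε·u(r)/(2Δ). Then for every t ≥ 0, the probability under p of the set { r ∈ R : u(r) < max_{r' ∈ R} u(r') − 2Δ·(t + ln s)/ε } is at most e^{−t}. -/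
open Finset

theorem stmt6 {R : Type*} [Fintype R] [Nonempty R] (ε Δ : ℝ) (hε : 0 < ε) (hΔ : 0 < Δ)
    (u : R → ℝ) (t : ℝ) (ht : 0 ≤ t) :
    ∑ r ∈ Finset.univ.filter
        (fun r => u r < (⨆ r', u r') - 2 * Δ * (t + Real.log (Fintype.card R)) / ε),
      gibbs (fun r' => ε * u r' / (2 * Δ)) r ≤ Real.exp (-t) := by
  classical
  set M := ⨆ r', u r' with hM
  set s := (Fintype.card R : ℝ) with hs
  have hs1 : (1 : ℝ) ≤ s := by
    have : 1 ≤ Fintype.card R := Fintype.card_pos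
    rw [hs]; exact_mod_cast this
  have hs0 : 0 < s := lt_of_lt_of_le one_pos hs1
  -- denominator bound
  obtain ⟨r₀, hr₀⟩ := Finite.exists_max u
  have hMle : M ≤ u r₀ := ciSup_le hr₀
  have hden : Real.exp (ε * M / (2 * Δ)) ≤
      ∑ r' : R, Real.exp (ε * u r' / (2 * Δ)) := by
    calc Real.exp (ε * M / (2 * Δ)) ≤ Real.exp (ε * u r₀ / (2 * Δ)) := by
          apply Real.exp_le_exp.2
          apply div_le_div_of_nonneg_right _ (by positivity)
          exact mul_le_mul_of_nonneg_left hMle hε.le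
      _ ≤ ∑ r' : R, Real.exp (ε * u r' / (2 * Δ)) :=
          Finset.single_le_sum (f := fun r' => Real.exp (ε * u r' / (2 * Δ)))
            (fun i _ => (Real.exp_pos _).le) (Finset.mem_univ r₀)
  have hdenpos : 0 < ∑ r' : R, Real.exp (ε * u r' / (2 * Δ)) :=
    lt_of_lt_of_le (Real.exp_pos _) hden
  -- each bad element has small probability
  have key : ∀ r ∈ Finset.univ.filter
      (fun r => u r < M - 2 * Δ * (t + Real.log s) / ε),
      gibbs (fun r' => ε * u r' / (2 * Δ)) r ≤ Real.exp (-t) / s := by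
    intro r hr
    have hur : u r < M - 2 * Δ * (t + Real.log s) / ε := (Finset.mem_filter.1 hr).2
    have h1 : gibbs (fun r' => ε * u r' / (2 * Δ)) r ≤
        Real.exp (ε * u r / (2 * Δ)) / Real.exp (ε * M / (2 * Δ)) := by
      unfold gibbs
      exact div_le_div_of_nonneg_left (Real.exp_pos _).le (Real.exp_pos _) hden
    have h2 : Real.exp (ε * u r / (2 * Δ)) / Real.exp (ε * M / (2 * Δ)) ≤
        Real.exp (-t) / s := by
      rw [← Real.exp_sub]
      have : ε * u r / (2 * Δ) - ε * M / (2 * Δ) ≤ -(t + Real.log s) := by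
        have hineq : u r - M ≤ -(2 * Δ * (t + Real.log s) / ε) := by linarith
        have : ε * (u r - M) / (2 * Δ) ≤ -(t + Real.log s) := by
          rw [div_le_iff₀ (by positivity)]
          calc ε * (u r - M) ≤ ε * (-(2 * Δ * (t + Real.log s) / ε)) :=
                mul_le_mul_of_nonneg_left hineq hε.le
            _ = -(t + Real.log s) * (2 * Δ) := by field_simp
        linarith [this, mul_div_assoc ε (u r - M) (2*Δ), (by ring : ε * (u r - M) / (2*Δ) = ε * u r / (2*Δ) - ε * M / (2*Δ))]
      calc Real.exp (ε * u r / (2 * Δ) - ε * M / (2 * Δ))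
          ≤ Real.exp (-(t + Real.log s)) := Real.exp_le_exp.2 this
        _ = Real.exp (-t) / s := by
            rw [neg_add, Real.exp_add, Real.exp_neg (Real.log s), Real.exp_log hs0]
            ring
    exact h1.trans h2
  calc ∑ r ∈ Finset.univ.filter
        (fun r => u r < M - 2 * Δ * (t + Real.log s) / ε),
        gibbs (fun r' => ε * u r' / (2 * Δ)) r
      ≤ ∑ _r ∈ Finset.univ.filter
        (fun r => u r < M - 2 * Δ * (t + Real.log s) / ε), (Real.exp (-t) / s) :=
        Finset.sum_le_sum key
    _ = (Finset.univ.filter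
        (fun r => u r < M - 2 * Δ * (t + Real.log s) / ε)).card * (Real.exp (-t) / s) := by
        rw [Finset.sum_const, nsmul_eq_mul]
    _ ≤ s * (Real.exp (-t) / s) := by
        apply mul_le_mul_of_nonneg_right _ (by positivity)
        rw [hs]
        exact_mod_cast Finset.card_filter_le _ _
    _ = Real.exp (-t) := by field_simp
end

section
/- Let N ≥ 1, let f : {1,…,N} → ℝ, and let Z_1, …, Z_N be independent real-valued random variables on a probability space, each distributed according to the standard Gumbel distribution. Then for each i ∈ {1,…,N}, P[ f_i + Z_i = max_{1 ≤ j ≤ N} (f_j + Z_j) ] = exp(f_i) / Σ_{j=1}^N exp(f_j). -/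
open MeasureTheory ProbabilityTheory Real Set Filter Topology

/-!
The joint law of `(Z j)_j` is the product of Gumbel laws. Conditioning on the value `t` of the
`i`-th coordinate, index `i` attains the maximum with probability `∏_{j ≠ i} F (t + f i - f j)`,
where `F x = exp (-exp (-x))` is the Gumbel distribution function. Gumbel laws are max-stable:
`∏_j F (t + c j) = F (t - log ∑_j exp (-c j))`; and the Gumbel density is `exp (-t) * F t`.
Hence the probability is `∫ exp (-t) * F (t - log S) dt = 1 / S` with `S = ∑_j exp (f j - f i)`.
-/

theorem integrable_of_hasDerivAt_of_nonneg_of_tendsto {F f : ℝ → ℝ} {m n : ℝ}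
    (hderiv : ∀ x, HasDerivAt F (f x) x) (hf : ∀ x, 0 ≤ f x)
    (hbot : Tendsto F atBot (𝓝 m)) (htop : Tendsto F atTop (𝓝 n)) : Integrable f := by
  have hF : Continuous F := continuous_iff_continuousAt.2 fun x => (hderiv x).continuousAt
  have hint : ∀ a b, IntegrableOn f (Ioc a b) := fun a b =>
    intervalIntegral.integrableOn_deriv_of_nonneg hF.continuousOn (fun x _ => hderiv x)
      (fun x _ => hf x)
  refine integrable_of_intervalIntegral_norm_tendsto (n - m) (fun r => hint (-r) r)
    tendsto_neg_atTop_atBot tendsto_id ((htop.sub (hbot.comp tendsto_neg_atTop_atBot)).congr' ?_)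
  filter_upwards [eventually_ge_atTop 0] with r hr
  simp_rw [Real.norm_of_nonneg (hf _)]
  exact (intervalIntegral.integral_eq_sub_of_hasDerivAt_of_le (by linarith) hF.continuousOn
    (fun x _ => hderiv x) ((intervalIntegrable_iff_integrableOn_Ioc_of_le (by linarith)).2
      (hint _ _))).symm

noncomputable def gumbelCDF (x : ℝ) : ℝ := exp (-exp (-x))

noncomputable def gumbelPDF (x : ℝ) : ℝ := exp (-x) * gumbelCDF x

lemma gumbelPDF_nonneg (x : ℝ) : 0 ≤ gumbelPDF x := by
  unfold gumbelPDF gumbelCDF; positivity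

@[fun_prop]
lemma continuous_gumbelCDF : Continuous gumbelCDF := by
  unfold gumbelCDF; fun_prop

@[fun_prop]
lemma continuous_gumbelPDF : Continuous gumbelPDF := by
  unfold gumbelPDF; fun_prop

lemma hasDerivAt_gumbelCDF (x : ℝ) : HasDerivAt gumbelCDF (gumbelPDF x) x := by
  have h := ((hasDerivAt_neg x).exp.neg).exp
  simp only [mul_neg, mul_one, neg_neg] at h
  rwa [gumbelPDF, gumbelCDF, mul_comm]

lemma tendsto_gumbelCDF_atBot : Tendsto gumbelCDF atBot (𝓝 0) :=
  tendsto_exp_atBot.comp <| tendsto_neg_atTop_atBot.comp <|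
    tendsto_exp_atTop.comp tendsto_neg_atBot_atTop

lemma tendsto_gumbelCDF_atTop : Tendsto gumbelCDF atTop (𝓝 1) := by
  have h : Tendsto (fun x => -exp (-x)) atTop (𝓝 0) := by
    simpa using (tendsto_exp_atBot.comp tendsto_neg_atTop_atBot).neg
  have h₁ := (continuous_exp.tendsto 0).comp h
  rwa [exp_zero] at h₁

lemma integrable_gumbelPDF : Integrable gumbelPDF :=
  integrable_of_hasDerivAt_of_nonneg_of_tendsto hasDerivAt_gumbelCDF gumbelPDF_nonneg
    tendsto_gumbelCDF_atBot tendsto_gumbelCDF_atTop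

lemma integral_Iic_gumbelPDF (x : ℝ) : ∫ t in Iic x, gumbelPDF t = gumbelCDF x := by
  simpa using integral_Iic_of_hasDerivAt_of_tendsto' (fun t _ => hasDerivAt_gumbelCDF t)
    integrable_gumbelPDF.integrableOn tendsto_gumbelCDF_atBot

lemma lintegral_gumbelPDF : ∫⁻ t, ENNReal.ofReal (gumbelPDF t) = 1 := by
  rw [← ofReal_integral_eq_lintegral_ofReal integrable_gumbelPDF (ae_of_all _ gumbelPDF_nonneg),
    integral_of_hasDerivAt_of_tendsto hasDerivAt_gumbelCDF integrable_gumbelPDF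
      tendsto_gumbelCDF_atBot tendsto_gumbelCDF_atTop]
  simp

noncomputable def gumbelMeasure : Measure ℝ :=
  volume.withDensity fun t => ENNReal.ofReal (gumbelPDF t)

instance : IsProbabilityMeasure gumbelMeasure :=
  ⟨by rw [gumbelMeasure, withDensity_apply _ .univ, Measure.restrict_univ, lintegral_gumbelPDF]⟩

lemma gumbelMeasure_Iic (x : ℝ) : gumbelMeasure (Iic x) = ENNReal.ofReal (gumbelCDF x) := by
  rw [gumbelMeasure, withDensity_apply _ measurableSet_Iic, ← integral_Iic_gumbelPDF,
    ofReal_integral_eq_lintegral_ofReal integrable_gumbelPDF.integrableOn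
      (ae_of_all _ gumbelPDF_nonneg)]

lemma prod_gumbelCDF_add {ι : Type*} [Fintype ι] [Nonempty ι] (c : ι → ℝ) (t : ℝ) :
    ∏ j, gumbelCDF (t + c j) = gumbelCDF (t - log (∑ j, exp (-c j))) := by
  have hS : 0 < ∑ j, exp (-c j) := Finset.sum_pos (fun j _ => exp_pos _) Finset.univ_nonempty
  rw [gumbelCDF, neg_sub, exp_sub, exp_log hS, Finset.sum_div, ← Finset.sum_neg_distrib,
    exp_sum]
  refine Finset.prod_congr rfl fun j _ => ?_
  rw [gumbelCDF, neg_add, exp_add, exp_neg t, div_eq_inv_mul]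

lemma lintegral_exp_neg_mul_gumbelCDF_sub (a : ℝ) :
    ∫⁻ t, ENNReal.ofReal (exp (-t) * gumbelCDF (t - a)) = ENNReal.ofReal (exp (-a)) := by
  have h : ∀ t, exp (-t) * gumbelCDF (t - a) = exp (-a) * gumbelPDF (t - a) := fun t => by
    rw [gumbelPDF, ← mul_assoc, ← exp_add]; ring_nf
  simp_rw [h, ENNReal.ofReal_mul (exp_pos _).le]
  rw [lintegral_const_mul' _ _ ENNReal.ofReal_ne_top,
    lintegral_sub_right_eq_self (fun t => ENNReal.ofReal (gumbelPDF t)) a, lintegral_gumbelPDF,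
    mul_one]

theorem measure_pi_forall_add_le_add {n : ℕ} (μ : Measure ℝ) [SigmaFinite μ]
    (f : Fin (n + 1) → ℝ) (i : Fin (n + 1)) :
    Measure.pi (fun _ => μ) {x | ∀ j, f j + x j ≤ f i + x i} =
      ∫⁻ t, ∏ k, μ (Iic (t + (f i - f (i.succAbove k)))) ∂μ := by
  set B : Set (ℝ × (Fin n → ℝ)) := {p | ∀ k, p.2 k ≤ p.1 + (f i - f (i.succAbove k))}
  have hB : MeasurableSet B := by
    simp only [B, ofPred_forall]
    exact .iInter fun k => measurableSet_le measurable_snd.eval (by fun_prop)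
  have hpre : {x | ∀ j, f j + x j ≤ f i + x i} =
      MeasurableEquiv.piFinSuccAbove (fun _ => ℝ) i ⁻¹' B := by
    ext x
    have hshift : ∀ j, f j + x j ≤ f i + x i ↔ x j ≤ x i + (f i - f j) := fun j => by
      constructor <;> intro h <;> linarith
    simp only [mem_ofPred_eq, mem_preimage, B, Fin.forall_iff_succAbove i, le_refl, true_and,
      hshift]
    rfl
  have hslice : ∀ t, Prod.mk t ⁻¹' B = univ.pi fun k => Iic (t + (f i - f (i.succAbove k))) := by
    intro t; ext y; simp [B, Pi.le_def]
  rw [hpre, (measurePreserving_piFinSuccAbove (fun _ => μ) i).measure_preimage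
    hB.nullMeasurableSet, Measure.prod_apply hB]
  simp_rw [hslice, Measure.pi_pi]

theorem gumbelMeasure_pi_forall_add_le_add {n : ℕ} (f : Fin (n + 1) → ℝ) (i : Fin (n + 1)) :
    Measure.pi (fun _ => gumbelMeasure) {x | ∀ j, f j + x j ≤ f i + x i} =
      ENNReal.ofReal (exp (f i) / ∑ j, exp (f j)) := by
  have hprod : ∀ t, gumbelPDF t * ∏ k, gumbelCDF (t + (f i - f (i.succAbove k))) =
      exp (-t) * gumbelCDF (t - log (∑ j, exp (f j - f i))) := fun t => by
    have h := prod_gumbelCDF_add (fun j => f i - f j) t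
    simp only [Fin.prod_univ_succAbove _ i, sub_self, add_zero, neg_sub] at h
    rw [gumbelPDF, mul_assoc, h]
  have hS : exp (-log (∑ j, exp (f j - f i))) = exp (f i) / ∑ j, exp (f j) := by
    rw [exp_neg, exp_log (Finset.sum_pos (fun j _ => exp_pos _) Finset.univ_nonempty)]
    simp_rw [exp_sub, ← Finset.sum_div, inv_div]
  have hslice : ∀ t, ∏ k, gumbelMeasure (Iic (t + (f i - f (i.succAbove k)))) =
      ENNReal.ofReal (∏ k, gumbelCDF (t + (f i - f (i.succAbove k)))) := fun t => by
    simp_rw [gumbelMeasure_Iic]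
    exact (ENNReal.ofReal_prod_of_nonneg fun k _ => (exp_pos _).le).symm
  simp_rw [measure_pi_forall_add_le_add, hslice]
  rw [gumbelMeasure, lintegral_withDensity_eq_lintegral_mul _ (by fun_prop) (by fun_prop)]
  simp_rw [Pi.mul_apply, ← ENNReal.ofReal_mul (gumbelPDF_nonneg _), hprod,
    lintegral_exp_neg_mul_gumbelCDF_sub, hS]

lemma map_eq_gumbelMeasure {Ω : Type*} [MeasurableSpace Ω] {P : Measure Ω}
    [IsProbabilityMeasure P] {X : Ω → ℝ} (hX : AEMeasurable X P)
    (hcdf : ∀ x, (P {ω | X ω ≤ x}).toReal = gumbelCDF x) :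
    P.map X = gumbelMeasure := by
  have := Measure.isProbabilityMeasure_map hX
  refine Measure.ext_of_Iic _ _ fun x => ?_
  rw [Measure.map_apply_of_aemeasurable hX measurableSet_Iic, gumbelMeasure_Iic, ← hcdf,
    ENNReal.ofReal_toReal (measure_ne_top _ _)]
  rfl

lemma apply_eq_ciSup_iff {ι α : Type*} [Finite ι] [ConditionallyCompleteLinearOrder α]
    (a : ι → α) (i : ι) : a i = ⨆ j, a j ↔ ∀ j, a j ≤ a i :=
  have : Nonempty ι := ⟨i⟩
  ⟨fun h j => h ▸ le_ciSup (finite_range a).bddAbove j,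
    fun h => le_antisymm (le_ciSup (finite_range a).bddAbove i) (ciSup_le h)⟩

theorem stmt7_general {Ω : Type*} [MeasureSpace Ω] [IsProbabilityMeasure (ℙ : Measure Ω)]
    (N : ℕ) (f : Fin N → ℝ) (Z : Fin N → Ω → ℝ)
    (hmeas : ∀ i, Measurable (Z i))
    (hindep : iIndepFun (m := fun _ => Real.measurableSpace) Z ℙ)
    (hgumbel : ∀ i x, (ℙ {ω | Z i ω ≤ x}).toReal = Real.exp (-Real.exp (-x)))
    (i : Fin N) :
    (ℙ {ω | f i + Z i ω = ⨆ j, (f j + Z j ω)}).toReal =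
      Real.exp (f i) / ∑ j, Real.exp (f j) := by
  obtain ⟨n, rfl⟩ : ∃ n, N = n + 1 := Nat.exists_eq_add_one.2 i.pos
  have hjoint : Measure.map (fun ω j => Z j ω) ℙ = Measure.pi fun _ => gumbelMeasure := by
    rw [(iIndepFun_iff_map_fun_eq_pi_map fun j => (hmeas j).aemeasurable).1 hindep]
    simp_rw [map_eq_gumbelMeasure (hmeas _).aemeasurable (hgumbel _)]
  have hevent : {ω | f i + Z i ω = ⨆ j, (f j + Z j ω)} =
      (fun ω j => Z j ω) ⁻¹' {x | ∀ j, f j + x j ≤ f i + x i} := by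
    ext ω; exact apply_eq_ciSup_iff (fun j => f j + Z j ω) i
  have hmeasurable : MeasurableSet {x : Fin (n + 1) → ℝ | ∀ j, f j + x j ≤ f i + x i} := by
    simp only [ofPred_forall]
    exact .iInter fun j => measurableSet_le (by fun_prop) (by fun_prop)
  rw [hevent, ← Measure.map_apply (measurable_pi_lambda _ hmeas) hmeasurable, hjoint,
    gumbelMeasure_pi_forall_add_le_add, ENNReal.toReal_ofReal (by positivity)]

theorem stmt7 {Ω : Type*} [MeasureSpace Ω] [IsProbabilityMeasure (ℙ : Measure Ω)]
    (N : ℕ) (hN : 1 ≤ N) (f : Fin N → ℝ) (Z : Fin N → Ω → ℝ)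
    (hmeas : ∀ i, Measurable (Z i))
    (hindep : iIndepFun (m := fun _ => Real.measurableSpace) Z ℙ)
    (hgumbel : ∀ i x, (ℙ {ω | Z i ω ≤ x}).toReal = Real.exp (-Real.exp (-x)))
    (i : Fin N) :
    (ℙ {ω | f i + Z i ω = ⨆ j, (f j + Z j ω)}).toReal =
      Real.exp (f i) / ∑ j, Real.exp (f j) :=
  stmt7_general N f Z hmeas hindep hgumbel i
end

section
/- Let ε > 0, Δ > 0, K ≥ 1, and let μ be the K-fold product measure on ℝ^K of Lap(0, Δ/ε). Then for all vectors a, b ∈ ℝ^K with Σ_{k=1}^K |a_k − b_k| ≤ Δ and every Borel set S ⊆ ℝ^K, μ({ z ∈ ℝ^K : a + z ∈ S }) ≤ e^ε · μ({ z ∈ ℝ^K : b + z ∈ S }). -/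
open MeasureTheory ENNReal

/-- The Laplace distribution `Lap(0, b)`: the measure on `ℝ` with density
`x ↦ (1/(2b)) * exp (-|x|/b)` with respect to Lebesgue measure. -/
noncomputable def lapMeasure (b : ℝ) : Measure ℝ :=
  volume.withDensity (fun x => ENNReal.ofReal ((1 / (2 * b)) * Real.exp (-|x| / b)))

/-- Tonelli for a product of one-variable functions over a finite power of a σ-finite measure. -/
lemma lintegral_pi_prod_aux (ν : Measure ℝ) [SigmaFinite ν] :
    ∀ (n : ℕ) (f : Fin n → ℝ → ℝ≥0∞), (∀ i, Measurable (f i)) →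
    ∫⁻ z : Fin n → ℝ, ∏ i, f i (z i) ∂ (Measure.pi fun _ => ν) = ∏ i, ∫⁻ x, f i x ∂ν := by
  intro n
  induction n with
  | zero =>
      intro f _
      simp [lintegral_const, Measure.pi_univ]
  | succ n ih =>
      intro f hf
      have hmp := (measurePreserving_piFinSuccAbove (fun _ : Fin (n + 1) => ν) 0).symm
      rw [← hmp.lintegral_comp_emb (MeasurableEquiv.measurableEmbedding _)]
      simp_rw [MeasurableEquiv.piFinSuccAbove_symm_apply, Fin.insertNthEquiv,
        Fin.prod_univ_succ, Fin.insertNth_zero, Equiv.coe_fn_mk]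
      simp only [Fin.zero_succAbove, cast_eq, Function.comp_def, Fin.cons_zero, Fin.cons_succ]
      have h2m : Measurable fun y : Fin n → ℝ => ∏ i : Fin n, f i.succ (y i) :=
        Finset.measurable_prod _ fun i _ => (hf i.succ).comp (measurable_pi_apply i)
      rw [lintegral_prod_mul (hf 0).aemeasurable h2m.aemeasurable,
        ih (fun i => f i.succ) (fun i => hf i.succ)]

private lemma lap_density_measurable (s : ℝ) :
    Measurable fun x : ℝ => ENNReal.ofReal ((1 / (2 * s)) * Real.exp (-|x| / s)) := by
  apply ENNReal.measurable_ofReal.comp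
  exact (measurable_const.mul ((continuous_abs.neg.div_const s).rexp.measurable))

instance lapMeasure_sigmaFinite (s : ℝ) : SigmaFinite (lapMeasure s) := by
  unfold lapMeasure
  infer_instance

/-- The finite power of a Laplace measure as a `withDensity` of Lebesgue on the pi space. -/
lemma pi_lap_eq (s : ℝ) (K : ℕ) :
    (Measure.pi fun _ : Fin K => lapMeasure s) =
      (Measure.pi fun _ : Fin K => (volume : Measure ℝ)).withDensity
        (fun z => ∏ i, ENNReal.ofReal ((1 / (2 * s)) * Real.exp (-|z i| / s))) := by
  set g : ℝ → ℝ≥0∞ := fun x => ENNReal.ofReal ((1 / (2 * s)) * Real.exp (-|x| / s)) with hg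
  have hgm : Measurable g := lap_density_measurable s
  have hFm : Measurable fun z : Fin K → ℝ => ∏ i, g (z i) :=
    Finset.measurable_prod _ fun i _ => hgm.comp (measurable_pi_apply i)
  apply Measure.pi_eq
  intro t ht
  rw [withDensity_apply _ (MeasurableSet.univ_pi ht)]
  have hind : ∀ z : Fin K → ℝ,
      (Set.univ.pi t).indicator (fun z : Fin K → ℝ => ∏ i, g (z i)) z =
        ∏ i, (t i).indicator g (z i) := by
    intro z
    by_cases hz : z ∈ Set.univ.pi t
    · rw [Set.indicator_of_mem hz]
      refine Finset.prod_congr rfl fun i _ => ?_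
      rw [Set.indicator_of_mem (hz i (Set.mem_univ i))]
    · rw [Set.indicator_of_notMem hz]
      rw [Set.mem_pi] at hz
      push_neg at hz
      obtain ⟨i, -, hi⟩ := hz
      refine (Finset.prod_eq_zero (Finset.mem_univ i) ?_).symm
      rw [Set.indicator_of_notMem hi]
  rw [← lintegral_indicator (MeasurableSet.univ_pi ht)]
  refine (lintegral_congr hind).trans ?_
  rw [lintegral_pi_prod_aux volume K (fun i => (t i).indicator g)
    (fun i => hgm.indicator (ht i))]
  refine Finset.prod_congr rfl fun i _ => ?_
  rw [lintegral_indicator (ht i)]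
  rw [lapMeasure, withDensity_apply _ (ht i)]

theorem stmt8 (ε Δ : ℝ) (hε : 0 < ε) (hΔ : 0 < Δ) (K : ℕ) (hK : 1 ≤ K)
    (a b : Fin K → ℝ) (hab : ∑ k, |a k - b k| ≤ Δ)
    (S : Set (Fin K → ℝ)) (hS : MeasurableSet S) :
    (Measure.pi fun _ : Fin K => lapMeasure (Δ / ε)) {z | a + z ∈ S} ≤
      ENNReal.ofReal (Real.exp ε) *
        (Measure.pi fun _ : Fin K => lapMeasure (Δ / ε)) {z | b + z ∈ S} := by
  set s : ℝ := Δ / ε with hs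
  have hspos : 0 < s := div_pos hΔ hε
  set g : ℝ → ℝ≥0∞ := fun x => ENNReal.ofReal ((1 / (2 * s)) * Real.exp (-|x| / s)) with hg
  have hgm : Measurable g := lap_density_measurable s
  set F : (Fin K → ℝ) → ℝ≥0∞ := fun z => ∏ i, g (z i) with hF
  have hFm : Measurable F :=
    Finset.measurable_prod _ fun i _ => hgm.comp (measurable_pi_apply i)
  set c : Fin K → ℝ := a - b with hc
  set A : Set (Fin K → ℝ) := {z | a + z ∈ S} with hA
  set B : Set (Fin K → ℝ) := {z | b + z ∈ S} with hB
  have hAm : MeasurableSet A := hS.preimage (measurable_const.add measurable_id)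
  have hBm : MeasurableSet B := hS.preimage (measurable_const.add measurable_id)
  have hAB : A = (fun z => z + c) ⁻¹' B := by
    ext z
    have hz : b + (z + c) = a + z := by rw [hc]; abel
    simp only [hA, hB, Set.mem_setOf_eq, Set.mem_preimage, hz]
  -- pointwise density bound
  have hgpt : ∀ (x t : ℝ), g (x - t) ≤ ENNReal.ofReal (Real.exp (|t| / s)) * g x := by
    intro x t
    rw [hg, ← ENNReal.ofReal_mul (Real.exp_nonneg _)]
    apply ENNReal.ofReal_le_ofReal
    rw [show Real.exp (|t| / s) * ((1 / (2 * s)) * Real.exp (-|x| / s)) =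
        (1 / (2 * s)) * (Real.exp (|t| / s) * Real.exp (-|x| / s)) by ring,
      ← Real.exp_add]
    apply mul_le_mul_of_nonneg_left _ (by positivity)
    apply Real.exp_le_exp.mpr
    rw [← add_div, div_le_div_iff_of_pos_right hspos]
    have := abs_sub_abs_le_abs_sub x (x - t)
    simp only [_root_.sub_sub_cancel] at this
    linarith
  have hsum : (∑ k, |c k|) / s ≤ ε := by
    have h1 : (∑ k, |c k|) ≤ Δ := by
      simpa [hc] using hab
    rw [div_le_iff₀ hspos]
    calc (∑ k, |c k|) ≤ Δ := h1
      _ = ε * s := by rw [hs]; field_simp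
  have hFpt : ∀ w : Fin K → ℝ, F (w - c) ≤ ENNReal.ofReal (Real.exp ε) * F w := by
    intro w
    calc F (w - c) = ∏ i, g (w i - c i) := by simp [hF]
      _ ≤ ∏ i, ENNReal.ofReal (Real.exp (|c i| / s)) * g (w i) :=
          Finset.prod_le_prod' fun i _ => hgpt (w i) (c i)
      _ = (∏ i, ENNReal.ofReal (Real.exp (|c i| / s))) * ∏ i, g (w i) := by
          rw [Finset.prod_mul_distrib]
      _ ≤ ENNReal.ofReal (Real.exp ε) * F w := by
          apply mul_le_mul_left
          rw [← ENNReal.ofReal_prod_of_nonneg (fun i _ => (Real.exp_nonneg _))]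
          apply ENNReal.ofReal_le_ofReal
          rw [← Real.exp_sum]
          apply Real.exp_le_exp.mpr
          rw [← Finset.sum_div]
          exact hsum
  -- rewrite both sides via the density
  have hvol : (Measure.pi fun _ : Fin K => lapMeasure s) =
      (Measure.pi fun _ : Fin K => (volume : Measure ℝ)).withDensity F := pi_lap_eq s K
  have hμ : ∀ (T : Set (Fin K → ℝ)), MeasurableSet T →
      (Measure.pi fun _ : Fin K => lapMeasure s) T
        = ∫⁻ z in T, F z ∂ (Measure.pi fun _ : Fin K => (volume : Measure ℝ)) := by
    intro T hT
    rw [hvol, withDensity_apply _ hT]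
  rw [hμ A hAm, hμ B hBm]
  -- the translation `z ↦ z + c` preserves the pi Lebesgue measure
  have hmp : MeasurePreserving (fun z : Fin K → ℝ => z + c)
      (Measure.pi fun _ : Fin K => (volume : Measure ℝ))
      (Measure.pi fun _ : Fin K => (volume : Measure ℝ)) := by
    have : (Measure.pi fun _ : Fin K => (volume : Measure ℝ)) = volume := by
      rw [volume_pi]
    rw [this]
    exact measurePreserving_add_right volume c
  have hemb : MeasurableEmbedding (fun z : Fin K → ℝ => z + c) :=
    (MeasurableEquiv.addRight c).measurableEmbedding
  have htrans : ∫⁻ z in A, F z ∂ (Measure.pi fun _ : Fin K => (volume : Measure ℝ))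
      = ∫⁻ w in B, F (w - c) ∂ (Measure.pi fun _ : Fin K => (volume : Measure ℝ)) := by
    rw [hAB]
    have := hmp.setLIntegral_comp_preimage_emb hemb (fun w => F (w - c)) B
    simp only [add_sub_cancel_right] at this
    exact this
  rw [htrans, ← lintegral_const_mul _ hFm]
  exact setLIntegral_mono' hBm fun w _ => hFpt w
end

section
/- Let 𝒳 be a linearly ordered set, let X and X' be swap-neighboring finite multisets over 𝒳 of size n, and let r ∈ ℝ be fixed. Define the utility u(X, e) = −| r_max(X, e) − r | for e ∈ 𝒳. Then for every e ∈ 𝒳, |u(X, e) − u(X', e)| ≤ 1. -/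
section

variable {𝒳 : Type*} [LinearOrder 𝒳]

lemma rmax_cons (a : 𝒳) (X : Multiset 𝒳) (x : 𝒳) :
    rmax (a ::ₘ X) x = rmax X x + if a ≤ x then 1 else 0 := by
  simp only [rmax, ← Multiset.countP_eq_card_filter, Multiset.countP_cons]

lemma abs_rmax_sub_rmax_le_one {X X' : Multiset 𝒳} (hnb : SwapNeighbor X X') (e : 𝒳) :
    |(rmax X e : ℝ) - rmax X' e| ≤ 1 := by
  obtain ⟨a, b, ha, rfl⟩ := hnb
  have hX : rmax X e = rmax (X.erase a) e + if a ≤ e then 1 else 0 := by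
    rw [← rmax_cons, Multiset.cons_erase ha]
  rw [hX, rmax_cons, abs_le]
  constructor <;> split_ifs <;> push_cast <;> linarith

end

lemma abs_neg_abs_sub_sub_neg_abs_sub_le {G : Type*} [AddCommGroup G] [LinearOrder G]
    [IsOrderedAddMonoid G] (x y r : G) :
    |(-|x - r|) - (-|y - r|)| ≤ |x - y| :=
  calc |(-|x - r|) - (-|y - r|)| = |(|y - r|) - (|x - r|)| := by rw [neg_sub_neg]
    _ ≤ |(y - r) - (x - r)| := abs_abs_sub_abs_le_abs_sub _ _
    _ = |x - y| := by rw [sub_sub_sub_cancel_right, abs_sub_comm]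

theorem stmt11_general {𝒳 : Type*} [LinearOrder 𝒳] (X X' : Multiset 𝒳)
    (hnb : SwapNeighbor X X')
    (r : ℝ) (e : 𝒳) :
    |(-|(rmax X e : ℝ) - r|) - (-|(rmax X' e : ℝ) - r|)| ≤ 1 :=
  (abs_neg_abs_sub_sub_neg_abs_sub_le _ _ r).trans (abs_rmax_sub_rmax_le_one hnb e)

theorem stmt11 {𝒳 : Type*} [LinearOrder 𝒳] (X X' : Multiset 𝒳) (n : ℕ)
    (hX : X.card = n) (hX' : X'.card = n) (hnb : SwapNeighbor X X')
    (r : ℝ) (e : 𝒳) :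
    |(-|(rmax X e : ℝ) - r|) - (-|(rmax X' e : ℝ) - r|)| ≤ 1 :=
  stmt11_general X X' hnb r e
end

section
/- Let 𝒳 be a finite nonempty set with |𝒳| = m, let α > 0, n ≥ 1, ε > 0, β ∈ (0,1), t ∈ ℝ, and let r̂_min, r̂_max : 𝒳 → ℝ satisfy r̂_min(x) ≤ r̂_max(x) for all x. Define u(x) = −d(t, [r̂_min(x), r̂_max(x)]) and assume there exists x* ∈ 𝒳 with d(t, [r̂_min(x*), r̂_max(x*)]) ≤ 2αn. Let x̂ be sampled from the Gibbs distribution on 𝒳 with score x ↦ ε·u(x)/(2·(4αn + 2)). Then with probability at least 1 − β, d(t, [r̂_min(x̂), r̂_max(x̂)]) ≤ 2αn + 2·(4αn + 2)·ln(m/β)/ε. -/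
open Finset

theorem stmt12 {𝒳 : Type*} [Fintype 𝒳] [Nonempty 𝒳]
    (m : ℕ) (hm : Fintype.card 𝒳 = m)
    (α : ℝ) (hα : 0 < α) (n : ℕ) (hn : 1 ≤ n) (ε : ℝ) (hε : 0 < ε)
    (β : ℝ) (hβ0 : 0 < β) (hβ1 : β < 1) (t : ℝ)
    (rhmin rhmax : 𝒳 → ℝ) (hle : ∀ x, rhmin x ≤ rhmax x)
    (hstar : ∃ xstar : 𝒳,
      Metric.infDist t (Set.Icc (rhmin xstar) (rhmax xstar)) ≤ 2 * α * n) :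
    ∑ x ∈ Finset.univ.filter (fun x : 𝒳 =>
        ¬ Metric.infDist t (Set.Icc (rhmin x) (rhmax x)) ≤
          2 * α * n + 2 * (4 * α * n + 2) * Real.log (m / β) / ε),
      gibbs (fun x : 𝒳 =>
        ε * (-(Metric.infDist t (Set.Icc (rhmin x) (rhmax x)))) / (2 * (4 * α * n + 2))) x
      ≤ β := by
  obtain ⟨xs, hxs⟩ := hstar
  set d : 𝒳 → ℝ := fun x => Metric.infDist t (Set.Icc (rhmin x) (rhmax x)) with hd
  set D : ℝ := 2 * (4 * α * n + 2) with hDdef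
  have hαn : (0:ℝ) ≤ α * n := by positivity
  have hD : 0 < D := by rw [hDdef]; nlinarith
  set f : 𝒳 → ℝ := fun x => ε * (-(d x)) / D with hf
  set S : ℝ := ∑ x : 𝒳, Real.exp (f x) with hS
  have hS0 : 0 < S :=
    Finset.sum_pos (fun x _ => Real.exp_pos _) ⟨Classical.arbitrary 𝒳, Finset.mem_univ _⟩
  have hm0 : (0:ℝ) < m := by
    have : 0 < Fintype.card 𝒳 := Fintype.card_pos
    rw [hm] at this
    exact_mod_cast this
  have hmβ : (0:ℝ) < (m:ℝ) / β := by positivity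
  have hexpS : Real.exp (f xs) ≤ S :=
    Finset.single_le_sum (fun x _ => (Real.exp_pos (f x)).le) (Finset.mem_univ xs)
  set bad : Finset 𝒳 := Finset.univ.filter (fun x : 𝒳 =>
      ¬ d x ≤ 2 * α * n + D * Real.log (m / β) / ε) with hbad
  have key : ∀ x ∈ bad, Real.exp (f x) ≤ (β / m) * Real.exp (f xs) := by
    intro x hx
    have hdx : 2 * α * n + D * Real.log (m / β) / ε < d x := by
      have := (Finset.mem_filter.mp hx).2
      push_neg at this
      exact this
    have h1 : f x ≤ f xs - Real.log ((m:ℝ) / β) := by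
      rw [hf]
      simp only
      rw [div_sub' hD.ne', div_le_div_iff₀ hD hD]
      have h2 : D * Real.log ((m:ℝ)/β) / ε * ε = D * Real.log ((m:ℝ)/β) := by
        field_simp
      nlinarith [mul_lt_mul_of_pos_left hdx hε, hxs, mul_le_mul_of_nonneg_left hxs hε.le]
    calc Real.exp (f x) ≤ Real.exp (f xs - Real.log ((m:ℝ)/β)) := Real.exp_le_exp.mpr h1
      _ = β / m * Real.exp (f xs) := by
          rw [Real.exp_sub, Real.exp_log hmβ]
          field_simp
  have hsum : ∑ x ∈ bad, Real.exp (f x) ≤ β * S := by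
    calc ∑ x ∈ bad, Real.exp (f x) ≤ ∑ _x ∈ bad, (β / m) * Real.exp (f xs) :=
          Finset.sum_le_sum key
      _ = bad.card * ((β / m) * Real.exp (f xs)) := by
          rw [Finset.sum_const, nsmul_eq_mul]
      _ ≤ m * ((β / m) * Real.exp (f xs)) := by
          apply mul_le_mul_of_nonneg_right _ (by positivity)
          have : bad.card ≤ Fintype.card 𝒳 := Finset.card_le_univ bad
          rw [hm] at this
          exact_mod_cast this
      _ = β * Real.exp (f xs) := by field_simp
      _ ≤ β * S := by nlinarith
  have : ∑ x ∈ bad, gibbs f x = (∑ x ∈ bad, Real.exp (f x)) / S := by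
    rw [Finset.sum_div]; rfl
  calc ∑ x ∈ bad, gibbs f x = (∑ x ∈ bad, Real.exp (f x)) / S := this
    _ ≤ β := by rw [div_le_iff₀ hS0]; exact hsum
end

section
/- Let 𝒳 be a finite nonempty set with |𝒳| = m, let ε ∈ (0,1], α ∈ (0,1], β ∈ (0,1) with L := ln(m/β) ≥ 1, and let n be an integer with n ≥ 12L/(αε). Set α* = αε/(24L). Let t ∈ [0, n], let r̂_min, r̂_max : 𝒳 → ℝ satisfy r̂_min(x) ≤ r̂_max(x) for all x, define u(x) = −d(t, [r̂_min(x), r̂_max(x)]), and assume there exists x* ∈ 𝒳 with d(t, [r̂_min(x*), r̂_max(x*)]) ≤ 2α*n. If x̂ is sampled from the Gibbs distribution on 𝒳 with score x ↦ ε·u(x)/(2·(4α*n + 2)), then with probability at least 1 − β, d(t, [r̂_min(x̂), r̂_max(x̂)]) ≤ αn. -/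
open Finset

namespace Gibbs

variable {R : Type*} [Fintype R]

theorem sum_le_card_mul_exp_sub (f : R → ℝ) (S : Finset R) {c M : ℝ} (x₀ : R)
    (hS : ∀ x ∈ S, f x ≤ c) (hx₀ : M ≤ f x₀) :
    ∑ x ∈ S, gibbs f x ≤ Fintype.card R * Real.exp (c - M) := by
  have hZ : Real.exp M ≤ ∑ r, Real.exp (f r) :=
    (Real.exp_le_exp.mpr hx₀).trans
      (single_le_sum (fun x _ => (Real.exp_pos (f x)).le) (mem_univ x₀))
  have hnum : ∑ x ∈ S, Real.exp (f x) ≤ Fintype.card R * Real.exp c :=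
    calc ∑ x ∈ S, Real.exp (f x) ≤ ∑ _x ∈ S, Real.exp c :=
          sum_le_sum fun x hx => Real.exp_le_exp.mpr (hS x hx)
      _ = #S * Real.exp c := by rw [sum_const, nsmul_eq_mul]
      _ ≤ Fintype.card R * Real.exp c := by gcongr; exact card_le_univ S
  calc ∑ x ∈ S, gibbs f x = (∑ x ∈ S, Real.exp (f x)) / ∑ r, Real.exp (f r) := by
        simp only [gibbs, sum_div]
    _ ≤ Fintype.card R * Real.exp c / Real.exp M :=
        div_le_div₀ (by positivity) hnum (Real.exp_pos M) hZ
    _ = Fintype.card R * Real.exp (c - M) := by rw [Real.exp_sub, mul_div_assoc]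

theorem sum_filter_not_le_le (u : R → ℝ) {ε D a b : ℝ} (hε : 0 ≤ ε) (hD : 0 < D) {x₀ : R}
    (hx₀ : u x₀ ≤ b) :
    ∑ x ∈ univ.filter (fun x => ¬ u x ≤ a), gibbs (fun x => ε * -u x / D) x
      ≤ Fintype.card R * Real.exp (-(ε * (a - b) / D)) := by
  have hscore : ∀ {s s' : ℝ}, s ≤ s' → ε * -s' / D ≤ ε * -s / D := fun h => by
    gcongr
  calc _ ≤ Fintype.card R * Real.exp (ε * -a / D - ε * -b / D) :=
        sum_le_card_mul_exp_sub _ _ x₀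
          (fun x hx => hscore (le_of_not_ge (mem_filter.mp hx).2)) (hscore hx₀)
    _ = Fintype.card R * Real.exp (-(ε * (a - b) / D)) := by ring_nf

end Gibbs

theorem le_exponent_of_twelve_mul_div_le {ε α L n : ℝ} (hε : 0 < ε) (hεL : ε ≤ L) (hα : 0 < α)
    (hn : 12 * L / (α * ε) ≤ n) :
    L ≤ ε * (α * n - 2 * (α * ε / (24 * L)) * n) / (2 * (4 * (α * ε / (24 * L)) * n + 2)) := by
  have hL : 0 < L := hε.trans_le hεL
  set A := α * ε / (24 * L) * n with hA
  have hαεn : α * ε * n = 24 * L * A := by rw [hA]; field_simp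
  have hA_half : 1 / 2 ≤ A := by
    rw [div_le_iff₀ (by positivity)] at hn
    nlinarith
  -- since `α ε n = 24 L A`, the goal reduces to `4 L + 2 ε A ≤ 16 L A`
  rw [le_div_iff₀ (by linarith)]
  nlinarith [mul_le_mul_of_nonneg_right hεL (by linarith : (0 : ℝ) ≤ A)]

theorem stmt13_general {𝒳 : Type*} [Fintype 𝒳]
    (m : ℕ) (hm : Fintype.card 𝒳 = m)
    (ε α β : ℝ) (hε0 : 0 < ε) (hε1 : ε ≤ 1) (hα0 : 0 < α)
    (hβ0 : 0 < β)
    (L : ℝ) (hL : L = Real.log (m / β)) (hL1 : 1 ≤ L)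
    (n : ℕ) (hn : 12 * L / (α * ε) ≤ (n : ℝ))
    (αstar : ℝ) (hαstar : αstar = α * ε / (24 * L))
    (t : ℝ)
    (rhmin rhmax : 𝒳 → ℝ)
    (hstar : ∃ xstar : 𝒳,
      Metric.infDist t (Set.Icc (rhmin xstar) (rhmax xstar)) ≤ 2 * αstar * n) :
    ∑ x ∈ Finset.univ.filter (fun x : 𝒳 =>
        ¬ Metric.infDist t (Set.Icc (rhmin x) (rhmax x)) ≤ α * n),
      gibbs (fun x : 𝒳 =>
        ε * (-(Metric.infDist t (Set.Icc (rhmin x) (rhmax x)))) /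
          (2 * (4 * αstar * n + 2))) x
      ≤ β := by
  obtain ⟨xstar, hxstar⟩ := hstar
  have hm0 : (0 : ℝ) < m := by
    rw [← hm]; exact_mod_cast Fintype.card_pos_iff.mpr ⟨xstar⟩
  have hexponent := le_exponent_of_twelve_mul_div_le hε0 (hε1.trans hL1) hα0 hn
  rw [← hαstar] at hexponent
  have hαstar0 : 0 ≤ αstar := by rw [hαstar]; positivity
  calc _ ≤ Fintype.card 𝒳 *
        Real.exp (-(ε * (α * n - 2 * αstar * n) / (2 * (4 * αstar * n + 2)))) :=
        Gibbs.sum_filter_not_le_le _ hε0.le (by positivity) hxstar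
    _ ≤ m * Real.exp (-L) := by rw [hm]; gcongr
    _ = β := by
        rw [hL, Real.exp_neg, Real.exp_log (by positivity)]
        field_simp

theorem stmt13 {𝒳 : Type*} [Fintype 𝒳] [Nonempty 𝒳]
    (m : ℕ) (hm : Fintype.card 𝒳 = m)
    (ε α β : ℝ) (hε0 : 0 < ε) (hε1 : ε ≤ 1) (hα0 : 0 < α) (hα1 : α ≤ 1)
    (hβ0 : 0 < β) (hβ1 : β < 1)
    (L : ℝ) (hL : L = Real.log (m / β)) (hL1 : 1 ≤ L)
    (n : ℕ) (hn : 12 * L / (α * ε) ≤ (n : ℝ))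
    (αstar : ℝ) (hαstar : αstar = α * ε / (24 * L))
    (t : ℝ) (ht0 : 0 ≤ t) (htn : t ≤ n)
    (rhmin rhmax : 𝒳 → ℝ) (hle : ∀ x, rhmin x ≤ rhmax x)
    (hstar : ∃ xstar : 𝒳,
      Metric.infDist t (Set.Icc (rhmin xstar) (rhmax xstar)) ≤ 2 * αstar * n) :
    ∑ x ∈ Finset.univ.filter (fun x : 𝒳 =>
        ¬ Metric.infDist t (Set.Icc (rhmin x) (rhmax x)) ≤ α * n),
      gibbs (fun x : 𝒳 =>
        ε * (-(Metric.infDist t (Set.Icc (rhmin x) (rhmax x)))) /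
          (2 * (4 * αstar * n + 2))) x
      ≤ β :=
  stmt13_general m hm ε α β hε0 hε1 hα0 hβ0 L hL hL1 n hn αstar hαstar t rhmin rhmax hstar
end

section
/- Let 𝒳 be a linearly ordered set, let m ≥ 1, ε ∈ (0,1], α ∈ (0,1], β ∈ (0,1) with L := ln(m/β) ≥ 1, set α* = αε/(24L), and let n be an integer with n ≥ 12L/(αε). Let X be a finite multiset of size n over 𝒳, let 𝒳₀ ⊆ 𝒳 be a finite set with |𝒳₀| = m, let t = ⌈qn⌉ for some q ∈ [0,1], and let r̂_min, r̂_max : 𝒳₀ → ℝ satisfy, for all x ∈ 𝒳₀: r̂_min(x) ≤ r̂_max(x), |r̂_min(x) − r_min(X, x)| ≤ 2α*n and |r̂_max(x) − r_max(X, x)| ≤ 2α*n. Assume there exists x* ∈ 𝒳₀ with d(t, [r̂_min(x*), r̂_max(x*)]) ≤ 2α*n. If x̂ is sampled from the Gibbs distribution on 𝒳₀ with score x ↦ ε·(−d(t, [r̂_min(x), r̂_max(x)]))/(2·(4α*n + 2)), then with probability at least 1 − β the interval [r_min(X, x̂), r_max(X, x̂)] intersects [t − αn, t + αn], i.e.,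 x̂ is an α-approximate q-quantile of X. -/
open Finset
open scoped Classical

/-! The exponential mechanism argument. If the true rank interval of `x` misses
`[t - αn, t + αn]`, its estimated interval is at distance at least `αn - 2α*n` from `t`, while
that of `x*` is within `2α*n`; so the Gibbs weight of `x` is at most
`exp (-ε (αn - 4α*n) / (2 (4α*n + 2))) ≤ exp (-L) = β / m` times that of `x*`, and there are at
most `m` such elements. -/

open Real

lemma rmin_le_rmax {𝒳 : Type*} [LinearOrder 𝒳] (X : Multiset 𝒳) (x : 𝒳) :
    rmin X x ≤ rmax X x :=
  Multiset.card_le_card (Multiset.monotone_filter_right X fun _ => le_of_lt)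

lemma le_infDist_Icc {a b t r : ℝ} (hab : a ≤ b) (h : r ≤ t - b ∨ r ≤ a - t) :
    r ≤ Metric.infDist t (Set.Icc a b) := by
  refine (Metric.le_infDist (Set.nonempty_Icc.mpr hab)).mpr fun y ⟨hay, hyb⟩ => ?_
  rw [Real.dist_eq]
  rcases h with h | h
  · exact h.trans ((sub_le_sub_left hyb t).trans (le_abs_self _))
  · exact h.trans ((sub_le_sub_right hay t).trans (abs_sub_comm t y ▸ le_abs_self _))

lemma sub_le_infDist_Icc_of_not_nonempty_inter {a b a' b' t r δ : ℝ} (hab : a ≤ b)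
    (hab' : a' ≤ b') (ha : |a' - a| ≤ δ) (hb : |b' - b| ≤ δ)
    (hdisj : ¬ (Set.Icc a b ∩ Set.Icc (t - r) (t + r)).Nonempty) :
    r - δ ≤ Metric.infDist t (Set.Icc a' b') := by
  rw [Set.Icc_inter_Icc, Set.nonempty_Icc, max_le_iff, le_min_iff, le_min_iff] at hdisj
  have hδ : 0 ≤ δ := (abs_nonneg _).trans ha
  rcases abs_le.mp ha with ⟨ha₁, ha₂⟩
  rcases abs_le.mp hb with ⟨hb₁, hb₂⟩
  by_cases hr : 0 ≤ r
  · apply le_infDist_Icc hab'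
    by_contra! h
    exact hdisj ⟨⟨hab, by linarith⟩, by linarith, by linarith⟩
  · linarith [Metric.infDist_nonneg (x := t) (s := Set.Icc a' b')]

lemma sum_filter_exp_div_sum_exp_le {ι : Type*} (s : Finset ι) (f : ι → ℝ) (p : ι → Prop)
    [DecidablePred p] {x₀ : ι} (hx₀ : x₀ ∈ s) {E : ℝ} (hgap : ∀ x ∈ s, p x → f x + E ≤ f x₀) :
    ∑ x ∈ s with p x, exp (f x) / ∑ y ∈ s, exp (f y) ≤ #s * exp (-E) := by
  have hx₀_le : exp (f x₀) ≤ ∑ y ∈ s, exp (f y) :=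
    single_le_sum (fun y _ => (exp_pos (f y)).le) hx₀
  have hterm : ∀ x ∈ s.filter p, exp (f x) / ∑ y ∈ s, exp (f y) ≤ exp (-E) := by
    intro x hx
    rw [mem_filter] at hx
    calc exp (f x) / ∑ y ∈ s, exp (f y) ≤ exp (f x) / exp (f x₀) := by gcongr
      _ = exp (f x - f x₀) := (exp_sub _ _).symm
      _ ≤ exp (-E) := exp_le_exp.mpr (by linarith [hgap x hx.1 hx.2])
  calc ∑ x ∈ s with p x, exp (f x) / ∑ y ∈ s, exp (f y)
      ≤ #(s.filter p) * exp (-E) := by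
        simpa only [sum_const, nsmul_eq_mul] using sum_le_sum hterm
    _ ≤ #s * exp (-E) :=
        mul_le_mul_of_nonneg_right (by exact_mod_cast card_filter_le s p) (exp_pos _).le

lemma le_mul_sub_div_of_le_mul {ε α n L αstar : ℝ} (hε1 : ε ≤ 1) (hL1 : 1 ≤ L)
    (hαstar : αstar = α * ε / (24 * L)) (hn : 12 * L ≤ α * ε * n) :
    L ≤ ε * (α * n - 4 * αstar * n) / (2 * (4 * αstar * n + 2)) := by
  have hL0 : 0 < L := one_pos.trans_le hL1
  have hw : 24 * L * (αstar * n) = α * ε * n := by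
    rw [hαstar]; field_simp
  have hw0 : 0 ≤ αstar * n := by nlinarith
  rw [le_div_iff₀ (by linarith)]
  nlinarith [mul_le_mul_of_nonneg_right hε1 hw0, mul_le_mul_of_nonneg_right hL1 hw0]

lemma exp_neg_log_div {m β : ℝ} (hm : 0 < m) (hβ : 0 < β) : exp (-log (m / β)) = β / m := by
  rw [exp_neg, exp_log (div_pos hm hβ), inv_div]

theorem stmt14_general {𝒳 : Type*} [LinearOrder 𝒳]
    (m : ℕ) (hm : 1 ≤ m)
    (ε α β : ℝ) (hε0 : 0 < ε) (hε1 : ε ≤ 1) (hα0 : 0 < α)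
    (hβ0 : 0 < β)
    (L : ℝ) (hL : L = Real.log (m / β)) (hL1 : 1 ≤ L)
    (αstar : ℝ) (hαstar : αstar = α * ε / (24 * L))
    (n : ℕ) (hn : 12 * L / (α * ε) ≤ (n : ℝ))
    (X : Multiset 𝒳)
    (X₀ : Finset 𝒳) (hX₀ : X₀.card = m)
    (t : ℝ)
    (rhmin rhmax : 𝒳 → ℝ)
    (hle : ∀ x ∈ X₀, rhmin x ≤ rhmax x)
    (hmin : ∀ x ∈ X₀, |rhmin x - (rmin X x : ℝ)| ≤ 2 * αstar * n)
    (hmax : ∀ x ∈ X₀, |rhmax x - (rmax X x : ℝ)| ≤ 2 * αstar * n)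
    (hstar : ∃ xstar ∈ X₀,
      Metric.infDist t (Set.Icc (rhmin xstar) (rhmax xstar)) ≤ 2 * αstar * n) :
    ∑ x ∈ X₀.filter (fun x =>
        ¬ (Set.Icc (rmin X x : ℝ) (rmax X x : ℝ) ∩
            Set.Icc (t - α * n) (t + α * n)).Nonempty),
      (Real.exp (ε * (-(Metric.infDist t (Set.Icc (rhmin x) (rhmax x)))) /
          (2 * (4 * αstar * n + 2))) /
        ∑ x' ∈ X₀, Real.exp (ε * (-(Metric.infDist t (Set.Icc (rhmin x') (rhmax x')))) /
          (2 * (4 * αstar * n + 2))))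
      ≤ β := by
  obtain ⟨xstar, hxstar, hxstar_near⟩ := hstar
  have hn' : 12 * L ≤ α * ε * n := by
    rw [div_le_iff₀ (mul_pos hα0 hε0)] at hn; linarith
  have hmargin := le_mul_sub_div_of_le_mul hε1 hL1 hαstar hn'
  have hαstar0 : 0 ≤ αstar := by rw [hαstar]; positivity
  set D := 2 * (4 * αstar * n + 2)
  have hD : 0 < D := by positivity
  refine (sum_filter_exp_div_sum_exp_le X₀
    (fun x => ε * -Metric.infDist t (Set.Icc (rhmin x) (rhmax x)) / D) _ hxstar
    (E := L) fun x hx hbad => ?_).trans ?_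
  · have hfar := sub_le_infDist_Icc_of_not_nonempty_inter
      (by exact_mod_cast rmin_le_rmax X x) (hle x hx) (hmin x hx) (hmax x hx) hbad
    calc _ ≤ ε * -Metric.infDist t (Set.Icc (rhmin x) (rhmax x)) / D +
          ε * (α * n - 4 * αstar * n) / D := by gcongr
      _ ≤ _ := by
        rw [← add_div, ← mul_add]
        gcongr
        linarith
  · rw [hX₀, hL, exp_neg_log_div (by exact_mod_cast hm) hβ0]
    exact (mul_div_cancel₀ β (by positivity)).le

theorem stmt14 {𝒳 : Type*} [LinearOrder 𝒳]
    (m : ℕ) (hm : 1 ≤ m)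
    (ε α β : ℝ) (hε0 : 0 < ε) (hε1 : ε ≤ 1) (hα0 : 0 < α) (hα1 : α ≤ 1)
    (hβ0 : 0 < β) (hβ1 : β < 1)
    (L : ℝ) (hL : L = Real.log (m / β)) (hL1 : 1 ≤ L)
    (αstar : ℝ) (hαstar : αstar = α * ε / (24 * L))
    (n : ℕ) (hn : 12 * L / (α * ε) ≤ (n : ℝ))
    (X : Multiset 𝒳) (hX : X.card = n)
    (X₀ : Finset 𝒳) (hX₀ : X₀.card = m)
    (q : ℝ) (hq0 : 0 ≤ q) (hq1 : q ≤ 1)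
    (t : ℝ) (ht : t = ⌈q * (n : ℝ)⌉)
    (rhmin rhmax : 𝒳 → ℝ)
    (hle : ∀ x ∈ X₀, rhmin x ≤ rhmax x)
    (hmin : ∀ x ∈ X₀, |rhmin x - (rmin X x : ℝ)| ≤ 2 * αstar * n)
    (hmax : ∀ x ∈ X₀, |rhmax x - (rmax X x : ℝ)| ≤ 2 * αstar * n)
    (hstar : ∃ xstar ∈ X₀,
      Metric.infDist t (Set.Icc (rhmin xstar) (rhmax xstar)) ≤ 2 * αstar * n) :
    ∑ x ∈ X₀.filter (fun x =>
        ¬ (Set.Icc (rmin X x : ℝ) (rmax X x : ℝ) ∩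
            Set.Icc (t - α * n) (t + α * n)).Nonempty),
      (Real.exp (ε * (-(Metric.infDist t (Set.Icc (rhmin x) (rhmax x)))) /
          (2 * (4 * αstar * n + 2))) /
        ∑ x' ∈ X₀, Real.exp (ε * (-(Metric.infDist t (Set.Icc (rhmin x') (rhmax x')))) /
          (2 * (4 * αstar * n + 2))))
      ≤ β :=
  stmt14_general m hm ε α β hε0 hε1 hα0 hβ0 L hL hL1 αstar hαstar n hn X X₀ hX₀ t rhmin rhmax hle
    hmin hmax hstar
end
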